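/- Let X, Y be coinfinite primitive recursive sets with R_X ≤_pr R_Y. Then (X,Y) satisfies the ♦-property if and only if there exists a primitive recursive function q such that #(0^Y)[t] = #(0^X)[q(t)] for infinitely many t; moreover, q can be taken nondecreasing, and '=' can be replaced by '≤'. -/

import Mathlib

/-
Write `a = zc X` and `b = zc Y`. `R_A ≤_pr R_B` amounts to a primitive recursive `h` with
`zc A ≤ zc B ∘ h`, so composing the bounds that come with a ♦-witness `(X', Y')` already gives
`b t ≤ a (q t)` for infinitely many `t`.

Conversely, suppose `b t ≤ a (q t)` for `t` in an infinite set `E`. Run the clock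
`Θ (t + 1) = Θ t + q t + 1` and let `ψ` be its floor inverse. Let `Y'` be `Y` slowed down along
`Θ` (counting function `b ∘ ψ`) and `X'` the set with counting function `min a (b ∘ ψ)`. Both
are pr-equivalent to the originals (for `R_X ≤ R_{X'}` one needs `a ≤ b ∘ h`, i.e. `R_X ≤ R_Y`),
and at `u = Θ t + q t` with `t ∈ E` we have `ψ u = t` and `u ≥ q t`, so both counts equal `b t`.

The variant with `=` follows by searching below `q t` for the place where `a` attains `b t`,
the monotone variant by replacing `q` with a monotone majorant.
-/

/-- The equivalence relation `R_X`: `x R_X y` iff both in `X` or `x = y`. -/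
def REq (X : Set ℕ) (x y : ℕ) : Prop := (x ∈ X ∧ y ∈ X) ∨ x = y

/-- Primitive recursive reducibility between binary relations on ℕ. -/
def PrRed (R S : ℕ → ℕ → Prop) : Prop :=
  ∃ f : ℕ → ℕ, Primrec f ∧ ∀ x y, R x y ↔ S (f x) (f y)

/-- pr-bireducibility. -/
def PrEquiv (R S : ℕ → ℕ → Prop) : Prop := PrRed R S ∧ PrRed S R

/-- `X` is a primitive recursive set. -/
def PRSet (X : Set ℕ) : Prop :=
  ∃ f : ℕ → Bool, Primrec f ∧ ∀ n, n ∈ X ↔ f n = true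

/-- `#(0^X)[s]`: the number of elements of the complement of `X` that are `≤ s`. -/
noncomputable def zc (X : Set ℕ) (s : ℕ) : ℕ := {k | k ≤ s ∧ k ∉ X}.ncard

/-- The ♦-property for a pair of sets. -/
def DiamondProp (X Y : Set ℕ) : Prop :=
  ∃ X' Y' : Set ℕ, PRSet X' ∧ PRSet Y' ∧
    PrEquiv (REq X') (REq X) ∧ PrEquiv (REq Y') (REq Y) ∧
    ∀ s, ∃ t, s ≤ t ∧ zc X' t = zc Y' t

open Classical

theorem prSet_iff_primrecPred {A : Set ℕ} : PRSet A ↔ PrimrecPred (· ∈ A) := by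
  constructor
  · rintro ⟨f, hf, hfA⟩
    exact Primrec.primrecPred (hf.of_eq fun n => by simp [hfA])
  · intro hA
    exact ⟨fun n => decide (n ∈ A), hA.decide, fun n => by simp⟩

theorem Primrec.nat_count {p : ℕ → Prop} [DecidablePred p] (hp : PrimrecPred p) :
    Primrec (Nat.count p) := by
  have hstep : Primrec₂ fun (n c : ℕ) => c + if p n then 1 else 0 :=
    (Primrec.nat_add.comp Primrec.snd
      (Primrec.ite (hp.comp Primrec.fst) (Primrec.const 1) (Primrec.const 0))).to₂
  refine (Primrec.nat_rec₁ 0 hstep).of_eq fun n => ?_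
  induction n with
  | zero => rfl
  | succ n ih => simp only [Nat.count_succ, ← ih]

theorem Primrec.exists_strictMono_majorant {f : ℕ → ℕ} (hf : Primrec f) :
    ∃ g : ℕ → ℕ, Primrec g ∧ StrictMono g ∧ ∀ n, f n ≤ g n := by
  let g : ℕ → ℕ := fun n => Nat.rec (f 0) (fun n m => max (m + 1) (f (n + 1))) n
  refine ⟨g, Primrec.nat_rec₁ _ ?_, strictMono_nat_of_lt_succ fun n => ?_, fun n => ?_⟩
  · exact (Primrec.nat_max.comp (Primrec.succ.comp Primrec.snd)
      (hf.comp (Primrec.succ.comp Primrec.fst))).to₂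
  · exact Nat.lt_of_succ_le (le_max_left _ _)
  · cases n
    · exact le_rfl
    · exact le_max_right _ _

section Counting

variable {A B : Set ℕ}

theorem zc_eq_count (A : Set ℕ) (s : ℕ) : zc A s = Nat.count (· ∉ A) (s + 1) := by
  rw [Nat.count_eq_card_filter_range, zc, ← Set.ncard_coe_finset]
  congr 1
  ext k
  simp

theorem zc_zero (A : Set ℕ) : zc A 0 = if 0 ∈ A then 0 else 1 := by
  rw [zc_eq_count, Nat.count_succ, Nat.count_zero]
  split_ifs <;> simp_all

theorem zc_succ (A : Set ℕ) (s : ℕ) : zc A (s + 1) = zc A s + if s + 1 ∈ A then 0 else 1 := by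
  rw [zc_eq_count, zc_eq_count, Nat.count_succ]
  split_ifs <;> simp_all

theorem zc_mono (A : Set ℕ) : Monotone (zc A) := fun s t hst => by
  simpa only [zc_eq_count] using Nat.count_monotone _ (Nat.succ_le_succ hst)

theorem zc_lt_zc {x y : ℕ} (hxy : x < y) (hy : y ∉ A) : zc A x < zc A y := by
  rw [zc_eq_count, zc_eq_count]
  exact (Nat.count_monotone _ hxy).trans_lt (Nat.count_strict_mono hy (Nat.lt_succ_self y))

theorem zc_pos {x : ℕ} (hx : x ∉ A) : 0 < zc A x := by
  rw [zc_eq_count]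
  exact (Nat.zero_le _).trans_lt (Nat.count_strict_mono hx (Nat.lt_succ_self x))

theorem zc_injOn_compl : Set.InjOn (zc A) Aᶜ := by
  intro x hx y hy hxy
  rcases lt_trichotomy x y with h | h | h
  · exact absurd hxy (zc_lt_zc h hy).ne
  · exact h
  · exact absurd hxy (zc_lt_zc h hx).ne'

theorem PRSet.primrec_zc (hA : PRSet A) : Primrec (zc A) :=
  ((Primrec.nat_count (prSet_iff_primrecPred.mp hA).not).comp Primrec.succ).of_eq
    fun s => (zc_eq_count A s).symm

theorem exists_notMem_zc_eq {v : ℕ} (hv : 1 ≤ v) {N : ℕ} (hN : v ≤ zc B N) :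
    ∃ m ≤ N, m ∉ B ∧ zc B m = v := by
  induction N with
  | zero =>
    rw [zc_zero] at hN
    split_ifs at hN with h0
    · omega
    · exact ⟨0, le_rfl, h0, by rw [zc_zero, if_neg h0]; omega⟩
  | succ N ih =>
    by_cases hvN : v ≤ zc B N
    · obtain ⟨m, hm, hmB, hmv⟩ := ih hvN
      exact ⟨m, hm.trans N.le_succ, hmB, hmv⟩
    · rw [zc_succ] at hN
      split_ifs at hN with hN1
      · omega
      · exact ⟨N + 1, le_rfl, hN1, by rw [zc_succ, if_neg hN1]; omega⟩

/-- The position of the `v`-th element of `Bᶜ` (counting from `1`), searched for below `N`. -/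
noncomputable def zcInv (B : Set ℕ) (N v : ℕ) : ℕ :=
  Nat.findGreatest (fun m => m ∉ B ∧ zc B m = v) N

theorem zcInv_spec {v N : ℕ} (hv : 1 ≤ v) (hN : v ≤ zc B N) :
    zcInv B N v ∉ B ∧ zc B (zcInv B N v) = v := by
  obtain ⟨m, hm, hmv⟩ := exists_notMem_zc_eq hv hN
  exact Nat.findGreatest_spec (P := fun m => m ∉ B ∧ zc B m = v) hm hmv

theorem PRSet.primrec₂_zcInv (hB : PRSet B) : Primrec₂ (zcInv B) :=
  Primrec.nat_findGreatest Primrec.fst <|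
    PrimrecPred.and ((prSet_iff_primrecPred.mp hB).not.comp Primrec.snd)
      (Primrec.eq.comp (hB.primrec_zc.comp Primrec.snd) (Primrec.snd.comp Primrec.fst))

end Counting

section CountingFunctions

def IsCountingFn (c : ℕ → ℕ) : Prop :=
  c 0 ≤ 1 ∧ ∀ n, c (n + 1) = c n ∨ c (n + 1) = c n + 1

/-- `n` is left out exactly where `c` increases, reading `c (-1)` as `0`. -/
def countSet (c : ℕ → ℕ) : Set ℕ := {n | c n = if n = 0 then 0 else c (n - 1)}

theorem isCountingFn_zc (A : Set ℕ) : IsCountingFn (zc A) := by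
  refine ⟨?_, fun n => ?_⟩
  · rw [zc_zero]; split_ifs <;> omega
  · rw [zc_succ]; split_ifs <;> simp

theorem IsCountingFn.min {c d : ℕ → ℕ} (hc : IsCountingFn c) (hd : IsCountingFn d) :
    IsCountingFn fun n => min (c n) (d n) := by
  refine ⟨min_le_of_left_le hc.1, fun n => ?_⟩
  dsimp only
  rcases hc.2 n with h | h <;> rcases hd.2 n with h' | h' <;> omega

theorem IsCountingFn.comp {c ψ : ℕ → ℕ} (hc : IsCountingFn c) (hψ0 : ψ 0 = 0)
    (hψ : ∀ n, ψ (n + 1) = ψ n ∨ ψ (n + 1) = ψ n + 1) : IsCountingFn (c ∘ ψ) := by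
  refine ⟨by simpa [hψ0] using hc.1, fun n => ?_⟩
  rcases hψ n with h | h
  · simp [h]
  · simpa [h] using hc.2 (ψ n)

theorem zc_countSet {c : ℕ → ℕ} (hc : IsCountingFn c) : zc (countSet c) = c := by
  funext n
  induction n with
  | zero =>
    have hmem : 0 ∈ countSet c ↔ c 0 = 0 := by simp [countSet]
    have := hc.1
    rw [zc_zero]
    split_ifs with h
    · exact (hmem.mp h).symm
    · rw [hmem] at h
      omega
  | succ n ih =>
    have hmem : n + 1 ∈ countSet c ↔ c (n + 1) = c n := by simp [countSet]
    rw [zc_succ, ih]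
    split_ifs with h
    · exact (hmem.mp h).symm
    · rw [hmem] at h
      have := hc.2 n
      omega

theorem prSet_countSet {c : ℕ → ℕ} (hc : Primrec c) : PRSet (countSet c) :=
  prSet_iff_primrecPred.mpr <| Primrec.eq.comp hc <|
    Primrec.ite (Primrec.eq.comp Primrec.id (Primrec.const 0)) (Primrec.const 0)
      (hc.comp (Primrec.nat_sub.comp Primrec.id (Primrec.const 1)))

end CountingFunctions

section Reductions

variable {A B : Set ℕ}

theorem prRed_REq_of_mapsTo_compl {F : ℕ → ℕ} (hF : Primrec F)
    (hA : ∀ x ∈ A, ∀ y ∈ A, REq B (F x) (F y)) (hAc : ∀ x ∉ A, F x ∉ B)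
    (hinj : ∀ x ∉ A, ∀ y, F y = F x → y = x) :
    PrRed (REq A) (REq B) := by
  refine ⟨F, hF, fun x y => ⟨?_, fun hxy => ?_⟩⟩
  · rintro (⟨hx, hy⟩ | rfl)
    · exact hA x hx y hy
    · exact Or.inr rfl
  · by_cases hx : x ∈ A
    · by_cases hy : y ∈ A
      · exact Or.inl ⟨hx, hy⟩
      · rcases hxy with ⟨-, hyB⟩ | heq
        · exact absurd hyB (hAc y hy)
        · exact Or.inr (hinj y hy x heq)
    · rcases hxy with ⟨hxB, -⟩ | heq
      · exact absurd hxB (hAc x hx)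
      · exact Or.inr (hinj x hx y heq.symm).symm

theorem prRed_of_zc_le (hA : PRSet A) (hB : PRSet B) {g : ℕ → ℕ} (hg : Primrec g)
    (h : ∀ s, zc A s ≤ zc B (g s)) : PrRed (REq A) (REq B) := by
  have hAp := prSet_iff_primrecPred.mp hA
  rcases B.eq_empty_or_nonempty with rfl | ⟨b₀, hb₀⟩
  · refine prRed_REq_of_mapsTo_compl (Primrec.ite hAp (Primrec.const 0) hA.primrec_zc) ?_ ?_ ?_
    · intro x hx y hy
      simp [REq, hx, hy]
    · simp
    · intro x hx y hxy
      by_cases hy : y ∈ A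
      · simp only [if_pos hy, if_neg hx] at hxy
        exact absurd hxy (zc_pos hx).ne
      · simp only [if_neg hy, if_neg hx] at hxy
        exact zc_injOn_compl hy hx hxy
  · have hspec (x : ℕ) (hx : x ∉ A) := zcInv_spec (zc_pos hx) (h x)
    refine prRed_REq_of_mapsTo_compl (Primrec.ite hAp (Primrec.const b₀)
      ((hB.primrec₂_zcInv).comp hg hA.primrec_zc)) ?_ ?_ ?_
    · intro x hx y hy
      simp only [if_pos hx, if_pos hy]
      exact Or.inl ⟨hb₀, hb₀⟩
    · intro x hx
      simpa only [if_neg hx] using (hspec x hx).1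
    · intro x hx y hxy
      by_cases hy : y ∈ A
      · simp only [if_pos hy, if_neg hx] at hxy
        exact absurd (hxy ▸ hb₀) (hspec x hx).1
      · simp only [if_neg hy, if_neg hx] at hxy
        exact zc_injOn_compl hy hx ((hspec y hy).2.symm.trans (hxy ▸ (hspec x hx).2))

/- At most one `k ∉ A` has `f k ∈ B`; it is traded for the image of `s + 1`, which lies
outside `B` and differs from the images of the other `k ∉ A`. -/
theorem zc_le_zc_of_reduces {f : ℕ → ℕ} (hf : ∀ x ∉ A, ∀ y, REq B (f x) (f y) → x = y)
    {s N : ℕ} (hN : ∀ k ≤ s + 1, f k ≤ N) : zc A s ≤ zc B N := by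
  let G : ℕ → ℕ := fun k => if f k ∈ B then f (s + 1) else f k
  refine Set.ncard_le_ncard_of_injOn G ?_ ?_ ((Set.finite_Iic N).subset fun _ h => h.1)
  · rintro k ⟨hks, hkA⟩
    simp only [G]
    split_ifs with hkB
    · refine ⟨hN _ le_rfl, fun hB => ?_⟩
      have := hf k hkA (s + 1) (Or.inl ⟨hkB, hB⟩)
      omega
    · exact ⟨hN k (by omega), hkB⟩
  · rintro k ⟨hks, hkA⟩ l ⟨hls, hlA⟩ hkl
    simp only [G] at hkl
    split_ifs at hkl with hk hl hl
    · exact hf k hkA l (Or.inl ⟨hk, hl⟩)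
    · have := hf l hlA (s + 1) (Or.inr hkl.symm)
      omega
    · have := hf k hkA (s + 1) (Or.inr hkl)
      omega
    · exact hf k hkA l (Or.inr hkl)

theorem PrRed.exists_strictMono_bound (h : PrRed (REq A) (REq B)) :
    ∃ g : ℕ → ℕ, Primrec g ∧ StrictMono g ∧ ∀ s, zc A s ≤ zc B (g s) := by
  obtain ⟨f, hf, hfAB⟩ := h
  obtain ⟨M, hM, hMm, hfM⟩ := hf.exists_strictMono_majorant
  refine ⟨fun s => M (s + 1), hM.comp Primrec.succ, fun a b hab => hMm (Nat.succ_lt_succ hab),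
    fun s => zc_le_zc_of_reduces (fun x hx y hxy => ?_) fun k hk => (hfM k).trans (hMm.monotone hk)⟩
  rcases (hfAB x y).mpr hxy with ⟨hxA, -⟩ | rfl
  · exact absurd hxA hx
  · rfl

end Reductions

section Clock

def floorInv (Θ : ℕ → ℕ) (u : ℕ) : ℕ := Nat.findGreatest (fun t => Θ t ≤ u) u

variable {Θ : ℕ → ℕ}

theorem floorInv_spec (hΘ : StrictMono Θ) {n u : ℕ} (h : Θ n ≤ u) :
    n ≤ floorInv Θ u ∧ Θ (floorInv Θ u) ≤ u ∧ u < Θ (floorInv Θ u + 1) := by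
  have hnu : n ≤ u := (hΘ.id_le n).trans h
  refine ⟨Nat.le_findGreatest hnu h, Nat.findGreatest_spec (P := fun t => Θ t ≤ u) hnu h, ?_⟩
  by_contra! hle
  exact Nat.findGreatest_is_greatest (Nat.lt_succ_self _) ((hΘ.id_le _).trans hle) hle

theorem floorInv_eq (hΘ : StrictMono Θ) {t u : ℕ} (h₁ : Θ t ≤ u) (h₂ : u < Θ (t + 1)) :
    floorInv Θ u = t := by
  obtain ⟨hle, hΘle, -⟩ := floorInv_spec hΘ h₁
  exact le_antisymm (Nat.lt_succ_iff.mp (hΘ.lt_iff_lt.mp (hΘle.trans_lt h₂))) hle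

theorem floorInv_le (Θ : ℕ → ℕ) (u : ℕ) : floorInv Θ u ≤ u := Nat.findGreatest_le u

theorem floorInv_succ (hΘ : StrictMono Θ) (h₀ : Θ 0 = 0) (u : ℕ) :
    floorInv Θ (u + 1) = floorInv Θ u ∨ floorInv Θ (u + 1) = floorInv Θ u + 1 := by
  obtain ⟨-, h₁, h₂⟩ := floorInv_spec hΘ (n := 0) (u := u) (by rw [h₀]; exact Nat.zero_le u)
  rcases (show u + 1 ≤ Θ (floorInv Θ u + 1) from h₂).lt_or_eq with h | h
  · exact Or.inl (floorInv_eq hΘ (h₁.trans u.le_succ) h)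
  · exact Or.inr (floorInv_eq hΘ h.ge (by rw [h]; exact hΘ (Nat.lt_succ_self _)))

theorem primrec_floorInv (hΘ : Primrec Θ) : Primrec (floorInv Θ) :=
  Primrec.nat_findGreatest Primrec.id (Primrec.nat_le.comp (hΘ.comp Primrec.snd) Primrec.fst)

def clock (q : ℕ → ℕ) : ℕ → ℕ
  | 0 => 0
  | t + 1 => clock q t + q t + 1

variable {q : ℕ → ℕ}

theorem clock_strictMono : StrictMono (clock q) :=
  strictMono_nat_of_lt_succ fun t => by simp only [clock]; omega

theorem primrec_clock (hq : Primrec q) : Primrec (clock q) := by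
  refine (Primrec.nat_rec₁ 0 (Primrec.succ.comp
    (Primrec.nat_add.comp Primrec.snd (hq.comp Primrec.fst))).to₂).of_eq fun t => ?_
  induction t with
  | zero => rfl
  | succ t ih => simp only [clock, ← ih]

theorem floorInv_clock_add {t k : ℕ} (hk : k ≤ q t) : floorInv (clock q) (clock q t + k) = t :=
  floorInv_eq clock_strictMono (Nat.le_add_right _ _) (by simp only [clock]; omega)

theorem floorInv_clock (t : ℕ) : floorInv (clock q) (clock q t) = t :=
  floorInv_clock_add (Nat.zero_le _)

end Clock

section Diamond

variable {X Y : Set ℕ}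

theorem DiamondProp.exists_primrec_le (hD : DiamondProp X Y) :
    ∃ q : ℕ → ℕ, Primrec q ∧ {t | zc Y t ≤ zc X (q t)}.Infinite := by
  obtain ⟨X', Y', -, -, hX', hY', hco⟩ := hD
  obtain ⟨g, hg, hgm, hX'X⟩ := hX'.1.exists_strictMono_bound
  obtain ⟨h, hh, hhm, hYY'⟩ := hY'.2.exists_strictMono_bound
  refine ⟨fun T => g (h (T + 1)), hg.comp (hh.comp Primrec.succ),
    Set.infinite_of_forall_exists_gt fun n => ?_⟩
  obtain ⟨u, hu, hXY'⟩ := hco (h (n + 1))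
  obtain ⟨hnT, hTu, huT⟩ := floorInv_spec hhm hu
  refine ⟨floorInv h u, ?_, hnT⟩
  calc zc Y (floorInv h u) ≤ zc Y' (h (floorInv h u)) := hYY' _
    _ ≤ zc Y' u := zc_mono Y' hTu
    _ = zc X' u := hXY'.symm
    _ ≤ zc X (g u) := hX'X u
    _ ≤ zc X (g (h (floorInv h u + 1))) := zc_mono X (hgm.monotone huT.le)

theorem diamondProp_of_exists_le (hX : PRSet X) (hY : PRSet Y) (hred : PrRed (REq X) (REq Y))
    {q : ℕ → ℕ} (hq : Primrec q) (hE : {t | zc Y t ≤ zc X (q t)}.Infinite) :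
    DiamondProp X Y := by
  obtain ⟨h, hh, hhm, hXY⟩ := hred.exists_strictMono_bound
  let b' : ℕ → ℕ := zc Y ∘ floorInv (clock q)
  let a' : ℕ → ℕ := fun u => min (zc X u) (b' u)
  have hb' : IsCountingFn b' :=
    (isCountingFn_zc Y).comp Nat.findGreatest_zero (floorInv_succ clock_strictMono rfl)
  have ha' : IsCountingFn a' := (isCountingFn_zc X).min hb'
  have hb'p : Primrec b' := hY.primrec_zc.comp (primrec_floorInv (primrec_clock hq))
  have hX' := prSet_countSet (Primrec.nat_min.comp hX.primrec_zc hb'p)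
  have hY' := prSet_countSet hb'p
  refine ⟨countSet a', countSet b', hX', hY', ⟨?_, ?_⟩, ⟨?_, ?_⟩, fun s => ?_⟩
  · refine prRed_of_zc_le hX' hX Primrec.id fun u => ?_
    rw [zc_countSet ha']
    exact min_le_left _ _
  · refine prRed_of_zc_le hX hX' ((primrec_clock hq).comp hh) fun s => ?_
    rw [zc_countSet ha']
    refine le_min (zc_mono X ((hhm.id_le s).trans (clock_strictMono.id_le _))) ?_
    simpa only [b', Function.comp_apply, floorInv_clock] using hXY s
  · refine prRed_of_zc_le hY' hY Primrec.id fun u => ?_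
    rw [zc_countSet hb']
    exact zc_mono Y (floorInv_le _ u)
  · refine prRed_of_zc_le hY hY' (primrec_clock hq) fun t => ?_
    rw [zc_countSet hb']
    simp only [b', Function.comp_apply, floorInv_clock, le_rfl]
  · obtain ⟨t, ht, hst⟩ := hE.exists_gt s
    have ht : zc Y t ≤ zc X (q t) := ht
    refine ⟨clock q t + q t, hst.le.trans ((clock_strictMono.id_le t).trans le_self_add), ?_⟩
    rw [zc_countSet ha', zc_countSet hb']
    simp only [a', b', Function.comp_apply, floorInv_clock_add le_rfl]
    exact min_eq_right (ht.trans (zc_mono X le_add_self))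

theorem exists_primrec_eq_of_le (hX : PRSet X) (hY : PRSet Y) (hYc : Yᶜ.Nonempty)
    {q : ℕ → ℕ} (hq : Primrec q) (hE : {t | zc Y t ≤ zc X (q t)}.Infinite) :
    ∃ q' : ℕ → ℕ, Primrec q' ∧ {t | zc Y t = zc X (q' t)}.Infinite := by
  obtain ⟨m, hm⟩ := hYc
  refine ⟨fun t => zcInv X (q t) (zc Y t), hX.primrec₂_zcInv.comp hq hY.primrec_zc,
    (hE.sdiff (Set.finite_Iio m)).mono ?_⟩
  rintro t ⟨ht, hmt⟩
  have hpos : 1 ≤ zc Y t := (zc_pos hm).trans_le (zc_mono Y (not_lt.mp hmt))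
  exact (zcInv_spec hpos ht).2.symm

theorem exists_primrec_monotone_of_le {q : ℕ → ℕ} (hq : Primrec q)
    (hE : {t | zc Y t ≤ zc X (q t)}.Infinite) :
    ∃ q' : ℕ → ℕ, Primrec q' ∧ Monotone q' ∧ {t | zc Y t ≤ zc X (q' t)}.Infinite := by
  obtain ⟨g, hg, hgm, hqg⟩ := hq.exists_strictMono_majorant
  exact ⟨g, hg, hgm.monotone, hE.mono fun t ht => ht.trans (zc_mono X (hqg t))⟩

end Diamond

theorem stmt_15_general (X Y : Set ℕ) (hX : PRSet X) (hY : PRSet Y)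
    (hYc : Yᶜ.Infinite)
    (hred : PrRed (REq X) (REq Y)) :
    (DiamondProp X Y ↔
      ∃ q : ℕ → ℕ, Primrec q ∧ {t | zc Y t = zc X (q t)}.Infinite) ∧
    (DiamondProp X Y ↔
      ∃ q : ℕ → ℕ, Primrec q ∧ Monotone q ∧ {t | zc Y t ≤ zc X (q t)}.Infinite) := by
  have hle : DiamondProp X Y ↔ ∃ q : ℕ → ℕ, Primrec q ∧ {t | zc Y t ≤ zc X (q t)}.Infinite :=
    ⟨DiamondProp.exists_primrec_le, fun ⟨q, hq, hE⟩ => diamondProp_of_exists_le hX hY hred hq hE⟩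
  constructor
  · rw [hle]
    exact ⟨fun ⟨q, hq, hE⟩ => exists_primrec_eq_of_le hX hY hYc.nonempty hq hE,
      fun ⟨q, hq, hE⟩ => ⟨q, hq, hE.mono fun t ht => ht.le⟩⟩
  · rw [hle]
    exact ⟨fun ⟨q, hq, hE⟩ => exists_primrec_monotone_of_le hq hE,
      fun ⟨q, hq, _, hE⟩ => ⟨q, hq, hE⟩⟩

theorem stmt_15 (X Y : Set ℕ) (hX : PRSet X) (hY : PRSet Y)
    (hXc : Xᶜ.Infinite) (hYc : Yᶜ.Infinite)
    (hred : PrRed (REq X) (REq Y)) :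
    (DiamondProp X Y ↔
      ∃ q : ℕ → ℕ, Primrec q ∧ {t | zc Y t = zc X (q t)}.Infinite) ∧
    (DiamondProp X Y ↔
      ∃ q : ℕ → ℕ, Primrec q ∧ Monotone q ∧ {t | zc Y t ≤ zc X (q t)}.Infinite) :=
  stmt_15_general X Y hX hY hYc hred
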